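/- arXiv:1707.06187 — 3 statements merged into one kernel-verified Lean document; each statement's English description precedes it below -/
import Mathlib

section
/- Let $G$ be a group, $N \trianglelefteq G$ a perfect normal subgroup, $L \leq G$ with $LN = G$. Then the inflation functor from $R[L/(L\cap N)]$-modules to $R[G]$-modules induces an isomorphism on Yoneda Ext$^1$ groups: $\mathrm{Ext}^1_{L/(L\cap N)}(\sigma', \sigma) \xrightarrow{\sim} \mathrm{Ext}^1_G(\mathrm{e}(\sigma'), \mathrm{e}(\sigma))$. -/
/-- Let `G` be a group, `N ⊴ G` a perfect normal subgroup, `L ≤ G` with `LN = G`, and let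
`f : G →* L/(L ∩ N)` encode the composite `G ↠ G/N ≅ L/(L ∩ N)`.  The inflation functor
`e = (-) ∘ f` from `R[L/(L ∩ N)]`-modules to `R[G]`-modules induces an isomorphism on
Yoneda `Ext¹` groups, `Ext¹(σ', σ) ≃ Ext¹(e σ', e σ)`.  Concretely:
(surjectivity) every extension of `e σ'` by `e σ` is, compatibly, the inflation of an
extension of `σ'` by `σ`; (injectivity) any equivalence of inflated extensions is the
inflation of an equivalence of extensions. -/
theorem inflation_ext_one_iso {G : Type*} [Group G]
    (N : Subgroup G) [N.Normal] (hperf : commutator N = ⊤)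
    (L : Subgroup G) [(N.subgroupOf L).Normal]
    (hLN : ∀ g : G, ∃ l ∈ L, ∃ n ∈ N, g = l * n)
    (f : G →* L ⧸ N.subgroupOf L)
    (hf : ∀ l : L, f (l : G) = QuotientGroup.mk l)
    (hker : f.ker = N)
    {R : Type*} {V V' : Type*} [CommRing R]
    [AddCommGroup V] [Module R V] [AddCommGroup V'] [Module R V']
    (σ : Representation R (L ⧸ N.subgroupOf L) V)
    (σ' : Representation R (L ⧸ N.subgroupOf L) V') :
    -- surjectivity on Ext¹
    (∀ (W : Type*) [AddCommGroup W] [Module R W]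
      (ρ : Representation R G W) (i : V →ₗ[R] W) (p : W →ₗ[R] V'),
      Function.Injective i → Function.Surjective p →
      LinearMap.range i = LinearMap.ker p →
      (∀ g : G, i ∘ₗ ((σ.comp f) g) = (ρ g) ∘ₗ i) →
      (∀ g : G, p ∘ₗ (ρ g) = ((σ'.comp f) g) ∘ₗ p) →
      ∃ ρ₀ : Representation R (L ⧸ N.subgroupOf L) W,
        ρ₀.comp f = ρ ∧
        (∀ q, i ∘ₗ (σ q) = (ρ₀ q) ∘ₗ i) ∧
        (∀ q, p ∘ₗ (ρ₀ q) = (σ' q) ∘ₗ p)) ∧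
    -- injectivity on Ext¹
    (∀ (W₁ W₂ : Type*) [AddCommGroup W₁] [Module R W₁] [AddCommGroup W₂] [Module R W₂]
      (ρ₁ : Representation R (L ⧸ N.subgroupOf L) W₁)
      (ρ₂ : Representation R (L ⧸ N.subgroupOf L) W₂)
      (i₁ : V →ₗ[R] W₁) (p₁ : W₁ →ₗ[R] V') (i₂ : V →ₗ[R] W₂) (p₂ : W₂ →ₗ[R] V')
      (φ : W₁ ≃ₗ[R] W₂),
      Function.Injective i₁ → Function.Surjective p₁ →
      LinearMap.range i₁ = LinearMap.ker p₁ →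
      (∀ q, i₁ ∘ₗ (σ q) = (ρ₁ q) ∘ₗ i₁) → (∀ q, p₁ ∘ₗ (ρ₁ q) = (σ' q) ∘ₗ p₁) →
      Function.Injective i₂ → Function.Surjective p₂ →
      LinearMap.range i₂ = LinearMap.ker p₂ →
      (∀ q, i₂ ∘ₗ (σ q) = (ρ₂ q) ∘ₗ i₂) → (∀ q, p₂ ∘ₗ (ρ₂ q) = (σ' q) ∘ₗ p₂) →
      (∀ g : G, (φ : W₁ →ₗ[R] W₂) ∘ₗ ((ρ₁.comp f) g) = ((ρ₂.comp f) g) ∘ₗ (φ : W₁ →ₗ[R] W₂)) →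
      (φ : W₁ →ₗ[R] W₂) ∘ₗ i₁ = i₂ → p₂ ∘ₗ (φ : W₁ →ₗ[R] W₂) = p₁ →
      (∀ q, (φ : W₁ →ₗ[R] W₂) ∘ₗ (ρ₁ q) = (ρ₂ q) ∘ₗ (φ : W₁ →ₗ[R] W₂))) := by
  classical
  -- f is surjective
  have hsurj : Function.Surjective f := by
    intro q
    induction q using QuotientGroup.induction_on with
    | _ l => exact ⟨l, hf l⟩
  constructor
  · -- surjectivity on Ext¹
    intro W _ _ ρ i p hinj hpsurj hexact hcomm hcomm'
    -- for n ∈ N, ρ n fixes range i and p ∘ ρ n = p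
    have hfn : ∀ n ∈ N, f n = 1 := by
      intro n hn; rwa [← MonoidHom.mem_ker, hker]
    have hDi : ∀ n ∈ N, (ρ n) ∘ₗ i = i := by
      intro n hn
      have := (hcomm n).symm
      rwa [MonoidHom.comp_apply, hfn n hn, map_one] at this
      -- i ∘ₗ 1 = i handled below
    have hpD : ∀ n ∈ N, p ∘ₗ (ρ n) = p := by
      intro n hn
      have := hcomm' n
      rwa [MonoidHom.comp_apply, hfn n hn, map_one] at this
    -- hDi currently says ρ n ∘ₗ i = i ∘ₗ 1; fix via simp in place
    have hDi' : ∀ n ∈ N, (ρ n) ∘ₗ i = i := by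
      intro n hn
      have h := hDi n hn
      simpa using h
    -- The difference map lands in range i and kills range i
    have hrange : ∀ n ∈ N, ∀ w : W, ρ n w - w ∈ LinearMap.range i := by
      intro n hn w
      rw [hexact, LinearMap.mem_ker, map_sub]
      have := congrArg (fun (φ : W →ₗ[R] V') => φ w) (hpD n hn)
      simp only [LinearMap.comp_apply] at this
      rw [this, sub_self]
    have hkill : ∀ n ∈ N, ∀ w ∈ LinearMap.range i, ρ n w = w := by
      intro n hn w hw
      obtain ⟨v, rfl⟩ := hw
      have := congrArg (fun (φ : V →ₗ[R] W) => φ v) (hDi' n hn)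
      simpa using this
    -- n ↦ ρ n - 1 is a monoid hom from N to the (abelian) additive group of endos
    have hmul : ∀ n ∈ N, ∀ m ∈ N,
        (ρ (n * m) : W →ₗ[R] W) - 1 = ((ρ n : W →ₗ[R] W) - 1) + ((ρ m : W →ₗ[R] W) - 1) := by
      intro n hn m hm
      ext w
      have h1 : ρ n (ρ m w - w) = ρ m w - w := hkill n hn _ (hrange m hm w)
      have h2 : ρ (n * m) w = ρ n (ρ m w) := by rw [map_mul]; rfl
      simp only [LinearMap.sub_apply, LinearMap.add_apply, Module.End.one_apply, h2]
      have h3 : ρ n (ρ m w) = ρ n w + (ρ m w - w) := by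
        have he : ρ m w = w + (ρ m w - w) := by abel
        conv_lhs => rw [he]
        rw [map_add, h1]
      rw [h3]; abel
    let c : N →* Multiplicative (W →ₗ[R] W) :=
      { toFun := fun n => Multiplicative.ofAdd ((ρ (n : G) : W →ₗ[R] W) - 1)
        map_one' := by
          simp only [Subgroup.coe_one, map_one, sub_self]
          rfl
        map_mul' := fun n m => by
          have := hmul (n : G) n.2 (m : G) m.2
          simp only [Subgroup.coe_mul]
          rw [this]
          rfl }
    have hcker : commutator N ≤ c.ker := by
      rw [commutator_def, Subgroup.commutator_le]
      intro a _ b _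
      rw [MonoidHom.mem_ker, map_commutatorElement]
      exact commutatorElement_eq_one_iff_commute.mpr (mul_comm _ _)
    have hN : ∀ n ∈ N, ρ n = 1 := by
      intro n hn
      have : c ⟨n, hn⟩ = 1 := hcker (hperf ▸ Subgroup.mem_top _)
      have h0 : (ρ n : W →ₗ[R] W) - 1 = 0 := by
        have := congrArg Multiplicative.toAdd this
        simpa [c] using this
      have := sub_eq_zero.mp h0
      exact this
    -- ρ is constant on fibers of f
    have hwd : ∀ g g' : G, f g = f g' → ρ g = ρ g' := by
      intro g g' h
      have hmem : g⁻¹ * g' ∈ N := by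
        rw [← hker, MonoidHom.mem_ker, map_mul, map_inv, h, inv_mul_cancel]
      have : ρ g' = ρ g := by
        calc ρ g' = ρ (g * (g⁻¹ * g')) := by group
          _ = ρ g * ρ (g⁻¹ * g') := map_mul ρ _ _
          _ = ρ g := by rw [hN _ hmem, mul_one]
      exact this.symm
    -- construct the descended representation
    let s : (L ⧸ N.subgroupOf L) → G := fun q => (hsurj q).choose
    have hs : ∀ q, f (s q) = q := fun q => (hsurj q).choose_spec
    refine ⟨{ toFun := fun q => ρ (s q)
              map_one' := by
                show ρ (s 1) = 1
                rw [hwd (s 1) 1 (by rw [hs, map_one]), map_one]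
              map_mul' := fun q q' => by
                show ρ (s (q * q')) = ρ (s q) * ρ (s q')
                rw [hwd (s (q * q')) (s q * s q') (by rw [hs, map_mul, hs, hs]),
                  map_mul] }, ?_, ?_, ?_⟩
    · ext g
      exact LinearMap.congr_fun (hwd (s (f g)) g (hs (f g))) _
    · intro q
      have := hcomm (s q)
      simpa [MonoidHom.comp_apply, hs q] using this
    · intro q
      have := hcomm' (s q)
      simpa [MonoidHom.comp_apply, hs q] using this
  · -- injectivity on Ext¹
    intro W₁ W₂ _ _ _ _ ρ₁ ρ₂ i₁ p₁ i₂ p₂ φ _ _ _ _ _ _ _ _ _ _ hφ _ _ q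
    obtain ⟨g, rfl⟩ := hsurj q
    simpa [MonoidHom.comp_apply] using hφ g
end

section
/- Let $A$ be an artinian local ring and $0 \to \bar\sigma \to \sigma \to \sigma' \to 0$ a short exact sequence of $A$-modules where $\bar\sigma$ is killed by $\mathfrak{m}_A$, $\sigma'$ is free over $A' = A/aA$ for some $0 \neq a \in A$ with $a\mathfrak{m}_A = 0$, and $\sigma$ is free over $A$. If $A \neq A/\mathfrak{m}_A$, then the image of $\bar\sigma$ in $\sigma$ is contained in $\mathfrak{m}_A \sigma$. -/
/-- Let `A` be an artinian local ring, `a ≠ 0` with `a𝔪 = 0`, and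
`0 → σ̄ → σ → σ' → 0` a short exact sequence of `A`-modules where `σ̄` is killed by `𝔪`,
`σ'` is free over `A' = A/aA`, and `σ` is free over `A`.  If `A ≠ A/𝔪`, then the image
of `σ̄` in `σ` is contained in `𝔪σ`. -/
theorem image_le_maximalIdeal_smul {A : Type*} [CommRing A]
    [IsArtinianRing A] [IsLocalRing A]
    (hA : IsLocalRing.maximalIdeal A ≠ ⊥)
    (a : A) (ha : a ≠ 0) (ham : ∀ x ∈ IsLocalRing.maximalIdeal A, a * x = 0)
    {B S S' : Type*} [AddCommGroup B] [Module A B]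
    [AddCommGroup S] [Module A S] [Module.Free A S]
    [AddCommGroup S'] [Module A S'] [Module (A ⧸ Ideal.span {a}) S']
    [IsScalarTower A (A ⧸ Ideal.span {a}) S']
    [Module.Free (A ⧸ Ideal.span {a}) S']
    (hB : ∀ x ∈ IsLocalRing.maximalIdeal A, ∀ b : B, x • b = 0)
    (i : B →ₗ[A] S) (p : S →ₗ[A] S')
    (hi : Function.Injective i) (hp : Function.Surjective p)
    (hexact : LinearMap.range i = LinearMap.ker p) :
    LinearMap.range i ≤ (IsLocalRing.maximalIdeal A • ⊤ : Submodule A S) := by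
  -- `a` is not a unit, hence `a ∈ 𝔪`.
  have haM : a ∈ IsLocalRing.maximalIdeal A := by
    rw [IsLocalRing.mem_maximalIdeal]
    intro hu
    apply hA
    ext x
    simp only [Submodule.mem_bot]
    constructor
    · intro hx
      exact hu.mul_left_cancel ((ham x hx).trans (mul_zero a).symm)
    · rintro rfl; exact zero_mem _
  rintro x ⟨b, rfl⟩
  -- `a • i b = 0`
  have hab : a • i b = 0 := by
    rw [← map_smul, hB a haM b, map_zero]
  -- use a basis of `S`
  let bs := Module.Free.chooseBasis A S
  -- each coordinate of `i b` lies in `𝔪`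
  have hcoord : ∀ j, bs.repr (i b) j ∈ IsLocalRing.maximalIdeal A := by
    intro j
    rw [IsLocalRing.mem_maximalIdeal]
    intro hu
    apply ha
    have h0 : a * bs.repr (i b) j = 0 := by
      have := congrArg (fun y => bs.repr y j) hab
      simpa [smul_eq_mul] using this
    exact hu.mul_right_cancel (h0.trans (zero_mul _).symm)
  -- conclude
  have := bs.linearCombination_repr (i b)
  rw [← this, Finsupp.linearCombination_apply, Finsupp.sum]
  exact Submodule.sum_mem _ fun j _ =>
    Submodule.smul_mem_smul (hcoord j) (Submodule.mem_top)
end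

section
/- Let $R$ be a commutative ring, $I$ a finitely generated ideal, and $(M_n)_{n\geq 1}$ an inverse system of $R$-modules with surjective transition maps such that $M_n$ is killed by $I^n$ and the map $M_{n+1}/I^n M_{n+1} \to M_n$ is an isomorphism for all $n$. Then $M := \varprojlim M_n$ satisfies $M/I^n M \cong M_n$ for all $n$, and $M$ is $I$-adically complete and separated. -/
section Yekutieli

variable {R : Type*} [CommRing R]
variable {M : ℕ → Type*} [∀ n, AddCommGroup (M n)] [∀ n, Module R (M n)]

/-- The inverse limit of an inverse system of `R`-modules indexed by `ℕ` (with `M n`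
playing the role of `M_{n+1}`), as a submodule of the product. -/
def invLimitSubmodule (t : ∀ n, M (n + 1) →ₗ[R] M n) : Submodule R (∀ n, M n) where
  carrier := {x | ∀ n, t n (x (n + 1)) = x n}
  add_mem' := by intro a b ha hb n; simp [ha n, hb n]
  zero_mem' := by intro n; simp
  smul_mem' := by intro c x hx n; simp [hx n]

/-- The projection of the inverse limit to the `n`-th stage. -/
def invLimitProj (t : ∀ n, M (n + 1) →ₗ[R] M n) (n : ℕ) :
    invLimitSubmodule t →ₗ[R] M n :=
  (LinearMap.proj n).comp (invLimitSubmodule t).subtype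

namespace YekAux

/-- cast between stages of the system -/
def mcast {a b : ℕ} (h : a = b) : M a →ₗ[R] M b := h ▸ LinearMap.id

lemma mcast_rfl {a : ℕ} (h : a = a) (z : M a) : mcast (R := R) h z = z := rfl

lemma t_mcast (t : ∀ n, M (n + 1) →ₗ[R] M n) {a b : ℕ} (h : a = b) (h' : a + 1 = b + 1)
    (z : M (a + 1)) : t b (mcast (R := R) h' z) = mcast (R := R) h (t a z) := by subst h; rfl

lemma mcast_mcast {a b c : ℕ} (h1 : a = b) (h2 : b = c) (z : M a) :
    mcast (R := R) h2 (mcast (R := R) h1 z) = mcast (R := R) (h1.trans h2) z := by subst h1; subst h2; rfl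

/-- descend `d` steps -/
def descend (t : ∀ n, M (n + 1) →ₗ[R] M n) (k : ℕ) : ∀ d : ℕ, M (k + d) →ₗ[R] M k
  | 0 => LinearMap.id
  | d + 1 => (descend t k d).comp (t (k + d))

lemma t_descend (t : ∀ n, M (n + 1) →ₗ[R] M n) (k : ℕ) (d : ℕ)
    (h : (k + 1) + d = k + (d + 1)) (z : M ((k + 1) + d)) :
    t k (descend t (k + 1) d z) = descend t k (d + 1) (mcast (R := R) h z) := by
  induction d with
  | zero => exact congrArg (t k) (mcast_rfl h z).symm
  | succ d ih =>
      have h' : (k + 1) + d = k + (d + 1) := by omega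
      show t k (descend t (k + 1) d (t ((k + 1) + d) z)) =
        descend t k (d + 1) (t (k + (d + 1)) (mcast h z))
      rw [ih h' (t ((k + 1) + d) z)]
      exact congrArg _ (t_mcast t h' h z).symm

/-- sequence recursion with choice -/
lemma seqRec {α : ℕ → Sort*} (Q : ∀ n, α n → α (n + 1) → Prop) (a : α 0)
    (step : ∀ n (x : α n), ∃ y, Q n x y) :
    ∃ f : ∀ n, α n, f 0 = a ∧ ∀ n, Q n (f n) (f (n + 1)) := by
  refine ⟨fun n => Nat.rec a (fun n x => Classical.choose (step n x)) n, rfl, fun n => ?_⟩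
  exact Classical.choose_spec (step n (Nat.rec a (fun n x => Classical.choose (step n x)) n))


variable (t : ∀ n, M (n + 1) →ₗ[R] M n)

lemma proj_apply (x : invLimitSubmodule t) (n : ℕ) : invLimitProj t n x = x.1 n := rfl

lemma descend_seq (n : ℕ) (u : ∀ d, M (n + d)) (hu : ∀ d, t (n + d) (u (d + 1)) = u d) :
    ∀ d, descend t n d (u d) = u 0 := by
  intro d
  induction d with
  | zero => rfl
  | succ d ih => show descend t n d (t (n + d) (u (d + 1))) = u 0; rw [hu d]; exact ih

lemma proj_surjective (hsurj : ∀ n, Function.Surjective (t n)) (n : ℕ) :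
    Function.Surjective (invLimitProj t n) := by
  intro a
  obtain ⟨u, hu0, hu⟩ := seqRec (α := fun d => M (n + d))
    (fun d x y => t (n + d) y = x) a (fun d x => hsurj (n + d) x)
  -- the full compatible sequence
  refine ⟨⟨fun k => descend t k (n + 1) (mcast (R := R) (by omega) (u (k + 1))), ?_⟩, ?_⟩
  · intro k
    show t k (descend t (k + 1) (n + 1) (mcast (R := R) (by omega : n + (k + 2) = (k + 1) + (n + 1)) (u (k + 2)))) = _
    rw [t_descend t k (n + 1) (by omega)]
    rw [mcast_mcast (R := R) (by omega : n + (k + 2) = (k + 1) + (n + 1)) (by omega) (u (k + 2))]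
    show descend t k (n + 1) (t (k + (n + 1)) (mcast (R := R) _ (u (k + 2)))) = _
    refine congrArg _ ?_
    exact (t_mcast t (by omega : n + (k + 1) = k + (n + 1)) (by omega) (u (k + 2))).trans
      (congrArg _ (hu (k + 1)))
  · show descend t n (n + 1) (mcast (R := R) _ (u (n + 1))) = a
    rw [mcast_rfl, ← hu0]
    exact descend_seq t n u hu (n + 1)


lemma map_mem_smul_top {A B : Type*} [AddCommGroup A] [Module R A] [AddCommGroup B]
    [Module R B] (J : Ideal R) (f : A →ₗ[R] B) {z : A}
    (hz : z ∈ (J • ⊤ : Submodule R A)) : f z ∈ (J • ⊤ : Submodule R B) := by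
  have hm : f z ∈ Submodule.map f (J • ⊤) := Submodule.mem_map_of_mem hz
  rw [Submodule.map_smul''] at hm
  exact Submodule.smul_mono le_rfl le_top hm

lemma comp_mem_smul (I : Ideal R) (e : ℕ) (x : invLimitSubmodule t) (k : ℕ) :
    ∀ d : ℕ, x.1 (k + d) ∈ (I ^ e • ⊤ : Submodule R (M (k + d))) →
      x.1 k ∈ (I ^ e • ⊤ : Submodule R (M k)) := by
  intro d
  induction d with
  | zero => exact id
  | succ d ih =>
      intro h
      refine ih ?_
      rw [← x.2 (k + d)]
      exact map_mem_smul_top _ _ h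

lemma comp_eq_zero (x : invLimitSubmodule t) (k : ℕ) :
    ∀ d : ℕ, x.1 (k + d) = 0 → x.1 k = 0 := by
  intro d
  induction d with
  | zero => exact id
  | succ d ih =>
      intro h
      refine ih ?_
      rw [← x.2 (k + d), show x.1 (k + d + 1) = 0 from h, map_zero]

/-- components of a kernel element all lie in `I^(n+1) • ⊤`. -/
lemma comps_mem (I : Ideal R) (hsurj : ∀ n, Function.Surjective (t n))
    (hker : ∀ n, LinearMap.ker (t n) = (I ^ (n + 1) • ⊤ : Submodule R (M (n + 1))))
    (n : ℕ) (x : invLimitSubmodule t) (hx : x.1 n = 0) (m : ℕ) :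
    x.1 m ∈ (I ^ (n + 1) • ⊤ : Submodule R (M m)) := by
  rcases le_or_gt m n with hmn | hnm
  · have h0 : x.1 m = 0 := by
      refine comp_eq_zero t x m (n - m) ?_
      have h : m + (n - m) = n := by omega
      rw [h, hx]
    rw [h0]; exact zero_mem _
  · -- m > n : prove by induction from n upward
    have main : ∀ m, n ≤ m → x.1 m ∈ (I ^ (n + 1) • ⊤ : Submodule R (M m)) := by
      intro m hm
      induction m, hm using Nat.le_induction with
      | base => rw [hx]; exact zero_mem _
      | succ m hm ih =>
          have h1 : t m (x.1 (m + 1)) ∈ (I ^ (n + 1) • ⊤ : Submodule R (M m)) := by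
            rw [x.2 m]; exact ih
          have h2 : (I ^ (n + 1) • ⊤ : Submodule R (M m)) =
              Submodule.map (t m) (I ^ (n + 1) • ⊤ : Submodule R (M (m + 1))) := by
            rw [Submodule.map_smul'', Submodule.map_top, LinearMap.range_eq_top.2 (hsurj m)]
          rw [h2] at h1
          obtain ⟨z', hz', hz'e⟩ := h1
          have hd : x.1 (m + 1) - z' ∈ LinearMap.ker (t m) := by
            simp [LinearMap.mem_ker, map_sub, hz'e, x.2 m]
          rw [hker m] at hd
          have hd' : x.1 (m + 1) - z' ∈ (I ^ (n + 1) • ⊤ : Submodule R (M (m + 1))) :=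
            Submodule.smul_mono (Ideal.pow_le_pow_right (by omega)) le_rfl hd
          have := Submodule.add_mem _ hz' hd'
          simpa using this
    exact main m (le_of_lt hnm)

/-- decomposition of elements of `span(range c) • S` -/
lemma exists_sum_smul {A : Type*} [AddCommGroup A] [Module R A] {r : ℕ} (c : Fin r → R)
    (S : Submodule R A) (z : A) (hz : z ∈ Ideal.span (Set.range c) • S) :
    ∃ w : Fin r → A, (∀ j, w j ∈ S) ∧ ∑ j, c j • w j = z := by
  refine Submodule.smul_induction_on hz ?_ ?_
  · intro a ha s hs
    obtain ⟨f, hf⟩ := (Submodule.mem_span_range_iff_exists_fun R).1 ha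
    refine ⟨fun j => f j • s, fun j => S.smul_mem _ hs, ?_⟩
    calc ∑ j, c j • f j • s = (∑ j, f j • c j) • s := by
          rw [Finset.sum_smul]
          exact Finset.sum_congr rfl fun j _ => by
            rw [smul_smul, smul_eq_mul, mul_comm]
      _ = a • s := by rw [hf]
  · rintro x y ⟨w1, h1, e1⟩ ⟨w2, h2, e2⟩
    refine ⟨w1 + w2, fun j => S.add_mem (h1 j) (h2 j), ?_⟩
    rw [← e1, ← e2, ← Finset.sum_add_distrib]
    exact Finset.sum_congr rfl fun j _ => by rw [Pi.add_apply, smul_add]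


lemma sum_smul_apply {r : ℕ} (c : Fin r → R) (g : Fin r → invLimitSubmodule t) (k : ℕ) :
    ((∑ j, c j • g j : invLimitSubmodule t) : ∀ i, M i) k = ∑ j, c j • ((g j : ∀ i, M i) k) := by
  induction (Finset.univ : Finset (Fin r)) using Finset.induction with
  | empty => simp
  | insert h ih => simp_all

lemma ker_le_smul (I : Ideal R) (hI : I.FG)
    (hkill : ∀ n, (I ^ (n + 1) • ⊤ : Submodule R (M n)) = ⊥)
    (hsurj : ∀ n, Function.Surjective (t n))
    (hker : ∀ n, LinearMap.ker (t n) = (I ^ (n + 1) • ⊤ : Submodule R (M (n + 1))))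
    (n : ℕ) :
    LinearMap.ker (invLimitProj t n) ≤
      (I ^ (n + 1) • ⊤ : Submodule R (invLimitSubmodule t)) := by
  classical
  intro x hx
  have hx0 : x.1 n = 0 := hx
  obtain ⟨r, c, hc⟩ := Submodule.fg_iff_exists_fin_generating_family.1 (Submodule.FG.pow hI (n + 1))
  have hcm : ∀ m, x.1 m ∈ Ideal.span (Set.range c) • (⊤ : Submodule R (M m)) := by
    intro m
    rw [show Ideal.span (Set.range c) = I ^ (n + 1) from hc]
    exact comps_mem t I hsurj hker n x hx0 m
  -- lifts along the projections
  have lift : ∀ (m : ℕ) (a : M m), ∃ z : invLimitSubmodule t, (z : ∀ i, M i) m = a := fun m a =>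
    proj_surjective t hsurj m a
  -- step of the recursion
  have step : ∀ (m : ℕ) (y : Fin r → invLimitSubmodule t),
      (∑ j, c j • ((y j : ∀ i, M i) m) = x.1 m) →
      ∃ y' : Fin r → invLimitSubmodule t, (∑ j, c j • ((y' j : ∀ i, M i) (m + 1)) = x.1 (m + 1)) ∧
        ∀ j, ((y' j : ∀ i, M i) (m + 1)) - ((y j : ∀ i, M i) (m + 1)) ∈
          (I ^ (m - n) • ⊤ : Submodule R (M (m + 1))) := by
    intro m y hy
    obtain ⟨w, -, hw⟩ := exists_sum_smul c ⊤ (x.1 (m + 1)) (by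
      simpa using hcm (m + 1))
    choose what hwhat using fun j => lift (m + 1) (w j)
    rcases lt_or_ge m n with hmn | hnm
    · -- fresh start
      refine ⟨what, ?_, ?_⟩
      · rw [Finset.sum_congr rfl fun j _ => by rw [hwhat j]]
        exact hw
      · intro j
        have h0 : m - n = 0 := by omega
        rw [h0, pow_zero, Ideal.one_eq_top, Submodule.top_smul]
        exact Submodule.mem_top
    · -- careful step
      set E : invLimitSubmodule t := (∑ j, c j • what j) - (∑ j, c j • y j) with hE
      have hEm1 : (E : ∀ i, M i) (m + 1) =
          (∑ j, c j • w j) - ∑ j, c j • ((y j : ∀ i, M i) (m + 1)) := by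
        show ((∑ j, c j • what j : invLimitSubmodule t) : ∀ i, M i) (m + 1)
            - ((∑ j, c j • y j : invLimitSubmodule t) : ∀ i, M i) (m + 1) = _
        rw [sum_smul_apply, sum_smul_apply,
          Finset.sum_congr rfl fun j _ => by rw [hwhat j]]
      have hEker : (E : ∀ i, M i) (m + 1) ∈ LinearMap.ker (t m) := by
        have hcompat := E.2 m
        have hEm : (E : ∀ i, M i) m = 0 := by
          show ((∑ j, c j • what j : invLimitSubmodule t) : ∀ i, M i) m
              - ((∑ j, c j • y j : invLimitSubmodule t) : ∀ i, M i) m = 0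
          rw [sum_smul_apply, sum_smul_apply, hy]
          have : ∀ j, ((what j : ∀ i, M i) m) = t m (w j) := by
            intro j
            rw [← hwhat j]
            exact ((what j).2 m).symm
          rw [Finset.sum_congr rfl fun j _ => by rw [this j, ← map_smul],
            ← map_sum, hw, x.2 m, sub_self]
        exact LinearMap.mem_ker.2 (by rw [hcompat, hEm])
      rw [hker m] at hEker
      have hE2 : (E : ∀ i, M i) (m + 1) ∈
          Ideal.span (Set.range c) • (I ^ (m - n) • ⊤ : Submodule R (M (m + 1))) := by
        rw [show Ideal.span (Set.range c) = I ^ (n + 1) from hc]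
        have hpow : I ^ (m + 1) = I ^ (n + 1) * I ^ (m - n) := by
          rw [← pow_add]; congr 1; omega
        rw [hpow, ← Ideal.smul_eq_mul, Submodule.smul_assoc] at hEker
        exact hEker
      obtain ⟨ε, hεS, hεsum⟩ := exists_sum_smul c _ _ hE2
      choose εhat hεhat using fun j => lift (m + 1) (ε j)
      refine ⟨fun j => y j + εhat j, ?_, ?_⟩
      · have : ∀ j, (((y j + εhat j : invLimitSubmodule t) : ∀ i, M i) (m + 1)) =
            ((y j : ∀ i, M i) (m + 1)) + ε j := by
          intro j
          show ((y j : ∀ i, M i) (m + 1)) + ((εhat j : ∀ i, M i) (m + 1)) = _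
          rw [hεhat j]
        rw [Finset.sum_congr rfl fun j _ => by rw [this j, smul_add],
          Finset.sum_add_distrib, hεsum, hEm1, hw]
        abel
      · intro j
        show ((y j : ∀ i, M i) (m + 1)) + ((εhat j : ∀ i, M i) (m + 1))
            - ((y j : ∀ i, M i) (m + 1)) ∈ _
        rw [hεhat j]
        simpa using hεS j
  -- base of the recursion
  obtain ⟨w0, -, hw0⟩ := exists_sum_smul c ⊤ (x.1 0) (by simpa using hcm 0)
  choose y0 hy0 using fun j => lift 0 (w0 j)
  have hbase : ∑ j, c j • ((y0 j : ∀ i, M i) 0) = x.1 0 := by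
    rw [Finset.sum_congr rfl fun j _ => by rw [hy0 j]]
    exact hw0
  -- run the recursion
  obtain ⟨f, -, hf⟩ := seqRec
    (α := fun m => {y : Fin r → invLimitSubmodule t // ∑ j, c j • ((y j : ∀ i, M i) m) = x.1 m})
    (fun m a b => ∀ j, ((b.1 j : ∀ i, M i) (m + 1)) - ((a.1 j : ∀ i, M i) (m + 1)) ∈
      (I ^ (m - n) • ⊤ : Submodule R (M (m + 1))))
    ⟨y0, hbase⟩
    (fun m a => by
      obtain ⟨y', h1, h2⟩ := step m a.1 a.2
      exact ⟨⟨y', h1⟩, h2⟩)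
  -- build the limit elements
  have Ycompat : ∀ j k, t k (((f ((n + 1) + (k + 1))).1 j : ∀ i, M i) (k + 1)) =
      ((f ((n + 1) + k)).1 j : ∀ i, M i) k := by
    intro j k
    set D : invLimitSubmodule t := (f ((n + 1) + k + 1)).1 j - (f ((n + 1) + k)).1 j with hD
    have hQ : (D : ∀ i, M i) ((n + 1) + k + 1) ∈
        (I ^ (((n + 1) + k) - n) • ⊤ : Submodule R (M ((n + 1) + k + 1))) :=
      hf ((n + 1) + k) j
    have hexp : ((n + 1) + k) - n = k + 1 := by omega
    rw [hexp] at hQ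
    have hidx : (n + 1) + k + 1 = k + (n + 2) := by omega
    rw [hidx] at hQ
    have hDk : (D : ∀ i, M i) k ∈ (I ^ (k + 1) • ⊤ : Submodule R (M k)) :=
      comp_mem_smul t I (k + 1) D k (n + 2) hQ
    rw [hkill k] at hDk
    have hDk0 : (D : ∀ i, M i) k = 0 := hDk
    have hcmp := ((f ((n + 1) + k + 1)).1 j).2 k
    show t k (((f ((n + 1) + k + 1)).1 j : ∀ i, M i) (k + 1))
        = ((f ((n + 1) + k)).1 j : ∀ i, M i) k
    rw [hcmp]
    have h0 : ((f ((n + 1) + k + 1)).1 j : ∀ i, M i) k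
        - ((f ((n + 1) + k)).1 j : ∀ i, M i) k = 0 := hDk0
    exact sub_eq_zero.1 h0
  set Y : Fin r → invLimitSubmodule t := fun j => ⟨fun k => ((f ((n + 1) + k)).1 j : ∀ i, M i) k,
    fun k => Ycompat j k⟩ with hY
  -- x equals the sum
  have hxeq : x = ∑ j, c j • Y j := by
    apply Subtype.ext
    funext k
    have hsum : ((∑ j, c j • Y j : invLimitSubmodule t) : ∀ i, M i) k
        = ∑ j, c j • ((f ((n + 1) + k)).1 j : ∀ i, M i) k := by
      rw [sum_smul_apply]
    rw [hsum]
    set G : invLimitSubmodule t := (∑ j, c j • (f ((n + 1) + k)).1 j) - x with hG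
    have hGtop : (G : ∀ i, M i) ((n + 1) + k) = 0 := by
      show ((∑ j, c j • (f ((n + 1) + k)).1 j : invLimitSubmodule t) : ∀ i, M i) ((n + 1) + k)
          - x.1 ((n + 1) + k) = 0
      rw [sum_smul_apply, (f ((n + 1) + k)).2, sub_self]
    have hidx : (n + 1) + k = k + (n + 1) := by omega
    rw [hidx] at hGtop
    have hGk : (G : ∀ i, M i) k = 0 := comp_eq_zero t G k (n + 1) hGtop
    have : ((∑ j, c j • (f ((n + 1) + k)).1 j : invLimitSubmodule t) : ∀ i, M i) k - x.1 k = 0 := hGk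
    rw [sum_smul_apply] at this
    have := sub_eq_zero.1 this
    exact this.symm
  rw [hxeq]
  refine Submodule.sum_mem _ fun j _ => ?_
  refine Submodule.smul_mem_smul ?_ Submodule.mem_top
  rw [show (I ^ (n + 1) : Ideal R) = Ideal.span (Set.range c) from hc.symm]
  exact Submodule.subset_span ⟨j, rfl⟩


lemma smul_le_ker (I : Ideal R)
    (hkill : ∀ n, (I ^ (n + 1) • ⊤ : Submodule R (M n)) = ⊥) (n : ℕ) :
    (I ^ (n + 1) • ⊤ : Submodule R (invLimitSubmodule t)) ≤
      LinearMap.ker (invLimitProj t n) := by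
  intro z hz
  have : invLimitProj t n z ∈ (I ^ (n + 1) • ⊤ : Submodule R (M n)) :=
    map_mem_smul_top _ _ hz
  rw [hkill n] at this
  exact LinearMap.mem_ker.2 this

end YekAux

/-- Yekutieli's theorem on `I`-adic systems: let `R` be a commutative ring, `I` a
finitely generated ideal, and `(M n)` an inverse system of `R`-modules with surjective
transition maps such that `M n` is killed by `I^(n+1)` and the induced map
`M (n+1) / I^(n+1) M (n+1) → M n` is an isomorphism (i.e. the transition map is
surjective with kernel `I^(n+1) M (n+1)`).  Then the inverse limit `L` satisfies
`L / I^(n+1) L ≅ M n` (the projections are surjective with kernel `I^(n+1) L`), and `L`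
is `I`-adically complete and separated. -/
theorem yekutieli_adic_system (I : Ideal R) (hI : I.FG)
    (t : ∀ n, M (n + 1) →ₗ[R] M n)
    (hkill : ∀ n, (I ^ (n + 1) • ⊤ : Submodule R (M n)) = ⊥)
    (hsurj : ∀ n, Function.Surjective (t n))
    (hker : ∀ n, LinearMap.ker (t n) = (I ^ (n + 1) • ⊤ : Submodule R (M (n + 1)))) :
    (∀ n, Function.Surjective (invLimitProj t n)) ∧
    (∀ n, LinearMap.ker (invLimitProj t n) =
      (I ^ (n + 1) • ⊤ : Submodule R (invLimitSubmodule t))) ∧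
    IsAdicComplete I (invLimitSubmodule t) := by
  have hsurjL := YekAux.proj_surjective t hsurj
  have hkerL : ∀ n, LinearMap.ker (invLimitProj t n) =
      (I ^ (n + 1) • ⊤ : Submodule R (invLimitSubmodule t)) := fun n =>
    le_antisymm (YekAux.ker_le_smul t I hI hkill hsurj hker n)
      (YekAux.smul_le_ker t I hkill n)
  refine ⟨hsurjL, hkerL, ?_⟩
  have h1 : IsHausdorff I (invLimitSubmodule t) := by
    constructor
    intro z hz
    apply Subtype.ext
    funext k
    have : z ∈ LinearMap.ker (invLimitProj t k) := by
      rw [hkerL k]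
      exact (SModEq.zero).1 (hz (k + 1))
    have hz0 : invLimitProj t k z = 0 := this
    exact hz0
  have h2 : IsPrecomplete I (invLimitSubmodule t) := by
    constructor
    intro g hg
    have compat : ∀ k, t k ((g (k + 2) : ∀ i, M i) (k + 1)) = (g (k + 1) : ∀ i, M i) k := by
      intro k
      have hd : g (k + 1) - g (k + 2) ∈
          (I ^ (k + 1) • ⊤ : Submodule R (invLimitSubmodule t)) :=
        SModEq.sub_mem.1 (hg (by omega : k + 1 ≤ k + 2))
      rw [← hkerL k] at hd
      have hd0 : invLimitProj t k (g (k + 1) - g (k + 2)) = 0 := hd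
      have hd0' : (g (k + 1) : ∀ i, M i) k - (g (k + 2) : ∀ i, M i) k = 0 := hd0
      rw [(g (k + 2)).2 k]
      exact (sub_eq_zero.1 hd0').symm
    set l : invLimitSubmodule t :=
      ⟨fun k => (g (k + 1) : ∀ i, M i) k, fun k => compat k⟩ with hl
    refine ⟨l, fun m => ?_⟩
    rcases Nat.eq_zero_or_pos m with hm | hm
    · subst hm
      rw [SModEq.sub_mem]
      simp [pow_zero, Ideal.one_eq_top, Submodule.top_smul]
    · obtain ⟨s, rfl⟩ : ∃ s, m = s + 1 := ⟨m - 1, by omega⟩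
      rw [SModEq.sub_mem, ← hkerL s]
      have : invLimitProj t s (g (s + 1) - l) = 0 := by
        show (g (s + 1) : ∀ i, M i) s - (l : ∀ i, M i) s = 0
        rw [hl]
        show (g (s + 1) : ∀ i, M i) s - (g (s + 1) : ∀ i, M i) s = 0
        exact sub_self _
      exact LinearMap.mem_ker.2 this
  exact { toIsHausdorff := h1, toIsPrecomplete := h2 }

end Yekutieli
end
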